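/- Suppose (i) ‖Ĥ − H‖₂ ≤ C_H·η and ‖Ŝ − S‖₂ ≤ C_S·η, (ii) E_g < 0 and a† H a ≥ E_g · (a† S a) for every a ∈ ℂ^d (so that E(a) ≥ E_g for all nonzero a), and (iii) inf_{a ≠ 0} E′(η, a) < 0. Then E_g ≤ inf_{a ≠ 0} Ê(η, a) ≤ inf_{a ≠ 0} E′(η, a). -/

import Mathlib

open Matrix
open scoped ComplexOrder InnerProductSpace

/-- Spectral norm (L2 operator norm) of a complex square matrix. -/
noncomputable def specNorm {d : ℕ} (A : Matrix (Fin d) (Fin d) ℂ) : ℝ :=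
  ‖Matrix.toEuclideanCLM (𝕜 := ℂ) A‖

/-- Rayleigh quotient ⟨A⟩(a) = (a† A a)/(a† a) (real-valued for Hermitian `A`). -/
noncomputable def rq {d : ℕ} (A : Matrix (Fin d) (Fin d) ℂ) (a : Fin d → ℂ) : ℝ :=
  (star a ⬝ᵥ A.mulVec a).re / (star a ⬝ᵥ a).re

lemma dot_self_re_eq {d : ℕ} (a : Fin d → ℂ) :
    (star a ⬝ᵥ a).re = ‖(WithLp.equiv 2 (Fin d → ℂ)).symm a‖^2 := by
  have : ⟪(WithLp.equiv 2 (Fin d → ℂ)).symm a, (WithLp.equiv 2 (Fin d → ℂ)).symm a⟫_ℂ = star a ⬝ᵥ a :=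
    (EuclideanSpace.inner_toLp_toLp a a).trans (dotProduct_comm _ _)
  rw [inner_self_eq_norm_sq_to_K] at this
  rw [← this]
  norm_cast

lemma dot_self_re_pos {d : ℕ} {a : Fin d → ℂ} (ha : a ≠ 0) :
    0 < (star a ⬝ᵥ a).re := by
  rw [dot_self_re_eq]
  have : (WithLp.equiv 2 (Fin d → ℂ)).symm a ≠ 0 := by
    simpa using ha
  exact pow_pos (norm_pos_iff.mpr this) 2

lemma quad_bound {d : ℕ} (A : Matrix (Fin d) (Fin d) ℂ) (c : ℝ) (hc : specNorm A ≤ c)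
    (a : Fin d → ℂ) :
    |(star a ⬝ᵥ A.mulVec a).re| ≤ c * (star a ⬝ᵥ a).re := by
  set x : EuclideanSpace ℂ (Fin d) := (WithLp.equiv 2 _).symm a with hx
  have h1 : (star a ⬝ᵥ A.mulVec a) = ⟪x, Matrix.toEuclideanCLM (𝕜 := ℂ) A x⟫_ℂ := by
    rw [hx]; exact dotProduct_comm _ _
  have h3 : ‖⟪x, Matrix.toEuclideanCLM (𝕜 := ℂ) A x⟫_ℂ‖ ≤ c * ‖x‖^2 := by
    calc ‖⟪x, Matrix.toEuclideanCLM (𝕜 := ℂ) A x⟫_ℂ‖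
        ≤ ‖x‖ * ‖Matrix.toEuclideanCLM (𝕜 := ℂ) A x‖ := norm_inner_le_norm _ _
      _ ≤ ‖x‖ * (specNorm A * ‖x‖) := by
          apply mul_le_mul_of_nonneg_left ((Matrix.toEuclideanCLM (𝕜 := ℂ) A).le_opNorm x)
            (norm_nonneg _)
      _ ≤ ‖x‖ * (c * ‖x‖) := by
          apply mul_le_mul_of_nonneg_left (mul_le_mul_of_nonneg_right hc (norm_nonneg _))
            (norm_nonneg _)
      _ = c * ‖x‖^2 := by ring
  calc |(star a ⬝ᵥ A.mulVec a).re| ≤ ‖star a ⬝ᵥ A.mulVec a‖ := Complex.abs_re_le_norm _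
    _ ≤ c * ‖x‖^2 := by rw [h1]; exact h3
    _ = c * (star a ⬝ᵥ a).re := by rw [dot_self_re_eq]

lemma rq_diff {d : ℕ} (A B : Matrix (Fin d) (Fin d) ℂ) (c : ℝ)
    (hc : specNorm (A - B) ≤ c) {a : Fin d → ℂ} (ha : a ≠ 0) :
    |rq A a - rq B a| ≤ c := by
  have hn := dot_self_re_pos ha
  have key := quad_bound (A - B) c hc a
  have hsub : (star a ⬝ᵥ (A - B).mulVec a).re
      = (star a ⬝ᵥ A.mulVec a).re - (star a ⬝ᵥ B.mulVec a).re := by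
    rw [Matrix.sub_mulVec, dotProduct_sub, Complex.sub_re]
  rw [hsub] at key
  have : rq A a - rq B a
      = ((star a ⬝ᵥ A.mulVec a).re - (star a ⬝ᵥ B.mulVec a).re) / (star a ⬝ᵥ a).re := by
    rw [rq, rq, div_sub_div_same]
  rw [this, abs_div, abs_of_pos hn, div_le_iff₀ hn]
  exact key

lemma pointA {N D Nh Dh ch cs Eg : ℝ} (hD : 0 < D) (hND : Eg * D ≤ N) (hEg : Eg < 0)
    (h1 : |Nh - N| ≤ ch) (h2 : |Dh - D| ≤ cs) :
    Eg ≤ (Nh + ch) / (Dh + cs) := by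
  rw [abs_le] at h1 h2
  have hden : 0 < Dh + cs := by linarith [h2.1]
  rw [le_div_iff₀ hden]
  nlinarith [h1.1, h2.1, mul_le_mul_of_nonpos_left (by linarith [h2.1] : D ≤ Dh + cs) hEg.le]

lemma pointB {N D Nh Dh ch cs : ℝ} (hD : 0 < D)
    (h1 : |Nh - N| ≤ ch) (h2 : |Dh - D| ≤ cs) (hneg : N + 2 * ch < 0) :
    (Nh + ch) / (Dh + cs) ≤ (N + 2 * ch) / (D + 2 * cs) := by
  rw [abs_le] at h1 h2
  have hd1 : 0 < Dh + cs := by linarith [h2.1]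
  have hd2 : 0 < D + 2 * cs := by nlinarith [h2.1, h2.2]
  rw [div_le_div_iff₀ hd1 hd2]
  nlinarith [h1.2, h2.2, mul_le_mul_of_nonneg_right (by linarith [h1.2] : Nh + ch ≤ N + 2 * ch)
    hd2.le, mul_le_mul_of_nonpos_left (by linarith [h2.2] : Dh + cs ≤ D + 2 * cs)
    (by linarith : N + 2 * ch ≤ 0)]

theorem stmt3 {d : ℕ} (hd : 1 ≤ d)
    (H S Hhat Shat : Matrix (Fin d) (Fin d) ℂ)
    (hH : H.IsHermitian) (hS : S.IsHermitian)
    (hHhat : Hhat.IsHermitian) (hShat : Shat.IsHermitian)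
    (hSpd : S.PosDef)
    (CH CS η Eg : ℝ) (hCH : 0 < CH) (hCS : 0 < CS) (hη : 0 < η)
    (hHnorm : specNorm (Hhat - H) ≤ CH * η)
    (hSnorm : specNorm (Shat - S) ≤ CS * η)
    (hEg : Eg < 0)
    (hHS : ∀ a : Fin d → ℂ, (star a ⬝ᵥ H.mulVec a).re ≥ Eg * (star a ⬝ᵥ S.mulVec a).re)
    (hEp : (⨅ a : {a : Fin d → ℂ // a ≠ 0},
        (rq H a.1 + 2 * CH * η) / (rq S a.1 + 2 * CS * η)) < 0) :
    Eg ≤ (⨅ a : {a : Fin d → ℂ // a ≠ 0},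
        (rq Hhat a.1 + CH * η) / (rq Shat a.1 + CS * η)) ∧
    (⨅ a : {a : Fin d → ℂ // a ≠ 0},
        (rq Hhat a.1 + CH * η) / (rq Shat a.1 + CS * η)) ≤
      (⨅ a : {a : Fin d → ℂ // a ≠ 0},
        (rq H a.1 + 2 * CH * η) / (rq S a.1 + 2 * CS * η)) := by
  haveI : Nonempty {a : Fin d → ℂ // a ≠ 0} :=
    ⟨⟨fun _ => 1, fun h => one_ne_zero (congrFun h ⟨0, hd⟩)⟩⟩
  -- pointwise facts
  have hDpos : ∀ p : {a : Fin d → ℂ // a ≠ 0}, 0 < rq S p.1 := by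
    intro ⟨a, ha⟩
    have := hSpd.dotProduct_mulVec_pos ha
    rw [Complex.pos_iff] at this
    exact div_pos this.1 (dot_self_re_pos ha)
  have hND : ∀ p : {a : Fin d → ℂ // a ≠ 0}, Eg * rq S p.1 ≤ rq H p.1 := by
    intro ⟨a, ha⟩
    have hn := dot_self_re_pos ha
    have := hHS a
    rw [rq, rq, ← mul_div_assoc]
    gcongr
  have hHd : ∀ p : {a : Fin d → ℂ // a ≠ 0}, |rq Hhat p.1 - rq H p.1| ≤ CH * η :=
    fun p => rq_diff _ _ _ hHnorm p.2
  have hSd : ∀ p : {a : Fin d → ℂ // a ≠ 0}, |rq Shat p.1 - rq S p.1| ≤ CS * η :=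
    fun p => rq_diff _ _ _ hSnorm p.2
  have kA : ∀ p : {a : Fin d → ℂ // a ≠ 0},
      Eg ≤ (rq Hhat p.1 + CH * η) / (rq Shat p.1 + CS * η) :=
    fun p => pointA (hDpos p) (hND p) hEg (hHd p) (hSd p)
  have hbdd : BddBelow (Set.range fun p : {a : Fin d → ℂ // a ≠ 0} =>
      (rq Hhat p.1 + CH * η) / (rq Shat p.1 + CS * η)) := by
    refine ⟨Eg, ?_⟩
    rintro x ⟨p, rfl⟩
    exact kA p
  refine ⟨le_ciInf kA, ?_⟩
  by_contra hcon
  push_neg at hcon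
  set IE := ⨅ a : {a : Fin d → ℂ // a ≠ 0},
      (rq Hhat a.1 + CH * η) / (rq Shat a.1 + CS * η) with hIE
  have hlt : (⨅ a : {a : Fin d → ℂ // a ≠ 0},
      (rq H a.1 + 2 * CH * η) / (rq S a.1 + 2 * CS * η)) < min IE 0 := lt_min hcon hEp
  obtain ⟨p, hp⟩ := exists_lt_of_ciInf_lt hlt
  have hpneg : (rq H p.1 + 2 * CH * η) / (rq S p.1 + 2 * CS * η) < 0 :=
    hp.trans_le (min_le_right _ _)
  have hden : 0 < rq S p.1 + 2 * CS * η := by nlinarith [hDpos p, mul_pos hCS hη]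
  have hnum : rq H p.1 + 2 * CH * η < 0 := by
    rcases div_neg_iff.mp hpneg with ⟨_, h2⟩ | ⟨h1, _⟩
    · linarith
    · exact h1
  have hle : (rq Hhat p.1 + CH * η) / (rq Shat p.1 + CS * η) ≤
      (rq H p.1 + 2 * CH * η) / (rq S p.1 + 2 * CS * η) :=
by
    have h := pointB (hDpos p) (hHd p) (hSd p) (by linarith : rq H p.1 + 2 * (CH * η) < 0)
    calc _ ≤ (rq H p.1 + 2 * (CH * η)) / (rq S p.1 + 2 * (CS * η)) := h
      _ = _ := by ring_nf
  have hIEle : IE ≤ (rq Hhat p.1 + CH * η) / (rq Shat p.1 + CS * η) := ciInf_le hbdd p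
  have := hp.trans_le (min_le_left _ _)
  linarith
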